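/- Let T = {(0,0)} ∪ {(z,w) ∈ ℂ² : z·w = 1} and let X = ℂ² \ T, with f : X → ℂ the restriction to X of the projection of ℂ² onto its first factor. Then f is not topologically locally trivial over ℂ at 0: there do not exist an open set U ⊆ ℂ with 0 ∈ U and a homeomorphism h : f⁻¹(U) → U × (ℂ \ {0}) such that the composition of h with the projection onto the first factor equals the restriction of f to f⁻¹(U). -/

import Mathlib

/-- The set `T = {(0,0)} ∪ {(z,w) : z·w = 1}` in `ℂ²`. -/
def ExampleT : Set (ℂ × ℂ) := {(0, 0)} ∪ {p : ℂ × ℂ | p.1 * p.2 = 1}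

/-- The open complex manifold `X = ℂ² \ T`. -/
def ExampleX : Set (ℂ × ℂ) := ExampleTᶜ

/-- The first-coordinate projection `f : X → ℂ`. -/
def exampleF (p : ExampleX) : ℂ := (p : ℂ × ℂ).1

/-! Suppose `h : f⁻¹(U) ≃ₜ U × (ℂ \ {0})` trivializes `f` near `0`. Then
`q ↦ h⁻¹(0, (h q).2)` retracts `f⁻¹(U)` onto the fiber `{0} × (ℂ \ {0})`. In that fiber the unit
circle `u ↦ (0, u)` is essential, but in `f⁻¹(U)` it is null-homotopic: slide it along the
straight line to the point `(z₀, 0)` for a small `z₀ ≠ 0`, which never meets the hyperbola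
`z w = 1` because `|z w| ≤ |z₀| < 1` along the way. The retraction would carry this null-homotopy
into `ℂ \ {0}`, contradicting the fact, proved by lifting along `exp`, that the unit circle
does not contract there. -/

open ContinuousMap unitInterval Topology

def circleInclusion : C(Circle, ({0}ᶜ : Set ℂ)) :=
  ⟨fun u => ⟨u, Circle.coe_ne_zero u⟩, by fun_prop⟩

/-- A lift `G` of a null-homotopy along `exp` gains `2πi` around the loop at time `0` and nothing at
time `1`; by uniqueness of lifts of the path `s ↦ F (s, 1)`, the gain does not depend on time. -/
theorem not_nullhomotopic_circleInclusion : ¬ circleInclusion.Nullhomotopic := by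
  rintro ⟨c, ⟨F⟩⟩
  have cov := Complex.isCoveringMap_exp
  let H : C(I × I, {z : ℂ // z ≠ 0}) :=
    F.toContinuousMap.comp ((ContinuousMap.id I).prodMap
      (Circle.exp.comp ⟨fun t : I => 2 * Real.pi * t, by fun_prop⟩))
  have H_apply (s t : I) : H (s, t) = F (s, Circle.exp (2 * Real.pi * t)) := rfl
  let angle : C(I, ℂ) := ⟨fun t => 2 * Real.pi * Complex.I * (t : ℝ), by fun_prop⟩
  have H_zero (t : I) : H (0, t) = ⟨Complex.exp (angle t), Complex.exp_ne_zero _⟩ := by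
    apply Subtype.ext
    rw [H_apply, F.apply_zero]
    simp only [circleInclusion, ContinuousMap.coe_mk, Circle.coe_exp, angle]
    push_cast
    ring_nf
  let G := cov.liftHomotopy H angle H_zero
  have G_lifts (s t : I) : Complex.exp (G (s, t)) = H (s, t) :=
    congr_arg Subtype.val (congr_fun (cov.liftHomotopy_lifts H angle H_zero) (s, t))
  have winding : G (1, 1) = G (1, 0) + 2 * Real.pi * Complex.I := by
    have := cov.eq_of_comp_eq (g₁ := fun s => G (s, 1))
      (g₂ := fun s => G (s, 0) + 2 * Real.pi * Complex.I) (by fun_prop) (by fun_prop) ?_ 0 ?_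
    · exact congr_fun this 1
    · funext s
      apply Subtype.ext
      simp only [Function.comp_apply, Complex.exp_periodic _, G_lifts, H_apply]
      simp
    · simp [G, cov.liftHomotopy_zero, angle]
  have flat : G (1, 1) = G (1, 0) := by
    refine cov.const_of_comp (g := fun t => G (1, t)) (by fun_prop) (fun t t' => ?_) 1 0
    apply Subtype.ext
    simp only [G_lifts, H_apply, F.apply_one]
    rfl
  simp [flat] at winding

lemma mem_exampleX_iff {p : ℂ × ℂ} : p ∈ ExampleX ↔ p ≠ (0, 0) ∧ p.1 * p.2 ≠ 1 := by
  simp [ExampleX, ExampleT, not_or]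

lemma mk_mem_exampleX {z w : ℂ} (hne : z = 0 → w ≠ 0) (hzw : ‖z‖ * ‖w‖ < 1) :
    (z, w) ∈ ExampleX := by
  refine mem_exampleX_iff.2 ⟨fun h => hne (congrArg Prod.fst h) (congrArg Prod.snd h), fun h => ?_⟩
  rw [← norm_mul, h, norm_one] at hzw
  exact hzw.false

lemma exampleF_symm_apply {U : Set ℂ} {F : Type*} [TopologicalSpace F]
    (h : exampleF ⁻¹' U ≃ₜ U × F) (hcomm : ∀ p, ((h p).1 : ℂ) = exampleF p) (x : U × F) :
    exampleF (h.symm x) = x.1 := by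
  rw [← hcomm, h.apply_symm_apply]

def fiberInclusion {U : Set ℂ} (hU0 : (0 : ℂ) ∈ U) : C(({0}ᶜ : Set ℂ), exampleF ⁻¹' U) :=
  ⟨fun w => ⟨⟨(0, w), mk_mem_exampleX (fun _ => w.2) (by simp)⟩, hU0⟩, by fun_prop⟩

theorem exists_retraction_fiberInclusion {U : Set ℂ} (hU0 : (0 : ℂ) ∈ U)
    (h : exampleF ⁻¹' U ≃ₜ U × ({0}ᶜ : Set ℂ)) (hcomm : ∀ p, ((h p).1 : ℂ) = exampleF p) :
    ∃ R : C(exampleF ⁻¹' U, ({0}ᶜ : Set ℂ)), R.comp (fiberInclusion hU0) = .id _ := by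
  let toFiber (q : exampleF ⁻¹' U) : exampleF ⁻¹' U := h.symm (⟨0, hU0⟩, (h q).2)
  have toFiber_fst (q) : ((toFiber q : ExampleX) : ℂ × ℂ).1 = 0 :=
    exampleF_symm_apply h hcomm _
  have toFiber_snd_ne (q) : ((toFiber q : ExampleX) : ℂ × ℂ).2 ≠ 0 := fun h0 =>
    (mem_exampleX_iff.1 (toFiber q : ExampleX).2).1 (Prod.ext (toFiber_fst q) h0)
  refine ⟨⟨fun q => ⟨((toFiber q : ExampleX) : ℂ × ℂ).2, toFiber_snd_ne q⟩, by fun_prop⟩, ?_⟩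
  ext w
  have h_fiber : h (fiberInclusion hU0 w) = (⟨0, hU0⟩, (h (fiberInclusion hU0 w)).2) :=
    Prod.ext (Subtype.ext (hcomm _)) rfl
  simp only [ContinuousMap.comp_apply, ContinuousMap.coe_mk, toFiber, ← h_fiber,
    Homeomorph.symm_apply_apply]
  rfl

lemma norm_coe_unitInterval_le_one (s : I) : ‖((s : ℝ) : ℂ)‖ ≤ 1 := by
  rw [Complex.norm_real, Real.norm_of_nonneg s.2.1]
  exact s.2.2

theorem nullhomotopic_fiberInclusion_comp_circleInclusion {U : Set ℂ} (hU : U ∈ 𝓝 0) :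
    ((fiberInclusion (mem_of_mem_nhds hU)).comp circleInclusion).Nullhomotopic := by
  obtain ⟨ε, hε, hball⟩ := Metric.mem_nhds_iff.mp hU
  set z₀ : ℂ := ((min ε 1 / 2 : ℝ) : ℂ)
  have hz₀ : z₀ ≠ 0 := by
    simp only [z₀, ne_eq, Complex.ofReal_eq_zero]
    positivity
  have hz₀_norm : ‖z₀‖ < min ε 1 := by
    rw [Complex.norm_real, Real.norm_of_nonneg (by positivity)]
    linarith [lt_min hε one_pos]
  have segment_norm (s : I) : ‖(s : ℂ) * z₀‖ ≤ ‖z₀‖ := by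
    rw [norm_mul]
    exact mul_le_of_le_one_left (norm_nonneg _) (norm_coe_unitInterval_le_one s)
  have segment_mem (s : I) : (s : ℂ) * z₀ ∈ U :=
    hball (mem_ball_zero_iff.2 ((segment_norm s).trans_lt (hz₀_norm.trans_le (min_le_left ..))))
  have line_mem (s : I) (u : Circle) : ((s : ℂ) * z₀, (σ s : ℂ) * u) ∈ ExampleX := by
    refine mk_mem_exampleX (fun h0 => ?_) ?_
    · have hs : (s : ℝ) = 0 := by simpa [hz₀] using h0
      simp [show s = 0 from Subtype.ext hs]
    · calc ‖(s : ℂ) * z₀‖ * ‖(σ s : ℂ) * u‖ ≤ ‖z₀‖ * 1 := by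
            rw [norm_mul _ (u : ℂ), Circle.norm_coe, mul_one]
            exact mul_le_mul (segment_norm s) (norm_coe_unitInterval_le_one _) (norm_nonneg _)
              (norm_nonneg _)
        _ < 1 := by linarith [min_le_right ε 1]
  refine ⟨⟨⟨(z₀, 0), mk_mem_exampleX (absurd · hz₀) (by simp)⟩,
      by simpa [exampleF] using segment_mem 1⟩,
    ⟨{ toFun := fun x => ⟨⟨_, line_mem x.1 x.2⟩, segment_mem x.1⟩
       continuous_toFun := by fun_prop
       map_zero_left := fun u => by ext <;> simp [fiberInclusion, circleInclusion]
       map_one_left := fun u => by ext <;> simp }⟩⟩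

/-- The projection `f : X → ℂ` is not topologically locally trivial at `0`:
there is no open neighborhood `U` of `0` and homeomorphism
`f⁻¹(U) ≃ U × (ℂ \ {0})` commuting with the projection to `U`. -/
theorem not_locally_trivial_at_zero :
    ¬ ∃ (U : Set ℂ), IsOpen U ∧ (0 : ℂ) ∈ U ∧
      ∃ h : (exampleF ⁻¹' U) ≃ₜ (U × ({0}ᶜ : Set ℂ)),
        ∀ p : exampleF ⁻¹' U, ((h p).1 : ℂ) = exampleF (p : ExampleX) := by
  rintro ⟨U, hU, hU0, h, hcomm⟩
  obtain ⟨R, hR⟩ := exists_retraction_fiberInclusion hU0 h hcomm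
  have := (nullhomotopic_fiberInclusion_comp_circleInclusion (hU.mem_nhds hU0)).comp_right R
  rw [← ContinuousMap.comp_assoc, hR, ContinuousMap.id_comp] at this
  exact not_nullhomotopic_circleInclusion this
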